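/- Let W = ℤ/2ℤ × ℤ/2ℤ act on D = ℂ× × ℂ× with generators s₁: (x,y) ↦ (x⁻¹,y⁻¹) and s₂: (x,y) ↦ (y,x). Then the extended quotient D//W is in bijection with the disjoint union of D/W, the quotient of the diagonal {(λ,λ)} by λ ↦ λ⁻¹, the quotient of the antidiagonal {(λ,λ⁻¹)} by λ ↦ λ⁻¹, and three additional points corresponding to the W-orbits {(1,1)}, {(-1,-1)}, {(1,-1),(-1,1)} in the fixed set of s₁. -/

import Mathlib

/-- The set `X~ = {(γ,x) : γ • x = x}`. -/
def Xtilde (Γ X : Type*) [Group Γ] [MulAction Γ X] : Type _ :=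
  {p : Γ × X // p.1 • p.2 = p.2}

instance xtildeSMul (Γ X : Type*) [Group Γ] [MulAction Γ X] : SMul Γ (Xtilde Γ X) :=
  ⟨fun α p => ⟨(α * p.val.1 * α⁻¹, α • p.val.2), by
    have h := p.property
    show (α * p.val.1 * α⁻¹) • (α • p.val.2) = α • p.val.2
    rw [mul_smul, mul_smul, inv_smul_smul, h]⟩⟩

instance xtildeAction (Γ X : Type*) [Group Γ] [MulAction Γ X] : MulAction Γ (Xtilde Γ X) where
  one_smul p := Subtype.ext (by
    show ((1 : Γ) * p.val.1 * 1⁻¹, (1 : Γ) • p.val.2) = p.val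
    simp)
  mul_smul a b p := Subtype.ext (by
    show ((a * b) * p.val.1 * (a * b)⁻¹, (a * b) • p.val.2)
        = (a * (b * p.val.1 * b⁻¹) * a⁻¹, a • b • p.val.2)
    rw [mul_smul]
    congr 1
    group)

/-- The extended quotient `X // Γ`. -/
def ExtQuot (Γ X : Type*) [Group Γ] [MulAction Γ X] : Type _ :=
  Quotient (MulAction.orbitRel Γ (Xtilde Γ X))

/-- The ordinary quotient `X / Γ`. -/
def OrdQuot (Γ X : Type*) [Group Γ] [MulAction Γ X] : Type _ :=
  Quotient (MulAction.orbitRel Γ X)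

/-- The projection `π : X // Γ → X / Γ`. -/
def piMap (Γ X : Type*) [Group Γ] [MulAction Γ X] : ExtQuot Γ X → OrdQuot Γ X :=
  Quotient.map (fun p => p.val.2) (by
    rintro p q ⟨α, hα⟩
    exact ⟨α, congrArg (fun r : Xtilde Γ X => r.val.2) hα⟩)


/-- The action map of the Klein four-group `ℤ/2ℤ × ℤ/2ℤ` on `D = ℂˣ × ℂˣ`: the first
generator acts by `(x,y) ↦ (x⁻¹,y⁻¹)` and the second by `(x,y) ↦ (y,x)`. -/
def kleinSmul (g : Multiplicative (ZMod 2) × Multiplicative (ZMod 2)) (p : ℂˣ × ℂˣ) :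
    ℂˣ × ℂˣ :=
  if Multiplicative.toAdd g.1 = 0 then
    (if Multiplicative.toAdd g.2 = 0 then p else (p.2, p.1))
  else
    (if Multiplicative.toAdd g.2 = 0 then (p.1⁻¹, p.2⁻¹) else (p.2⁻¹, p.1⁻¹))

instance kleinSMulInst : SMul (Multiplicative (ZMod 2) × Multiplicative (ZMod 2)) (ℂˣ × ℂˣ) :=
  ⟨kleinSmul⟩

instance kleinAction :
    MulAction (Multiplicative (ZMod 2) × Multiplicative (ZMod 2)) (ℂˣ × ℂˣ) where
  one_smul p := by
    show kleinSmul 1 p = p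
    simp [kleinSmul]
  mul_smul a b p := by
    show kleinSmul (a * b) p = kleinSmul a (kleinSmul b p)
    have h : ∀ c : ZMod 2, c = 0 ∨ c = 1 := by decide
    rcases h (Multiplicative.toAdd a.1) with h1 | h1 <;>
      rcases h (Multiplicative.toAdd a.2) with h2 | h2 <;>
        rcases h (Multiplicative.toAdd b.1) with h3 | h3 <;>
          rcases h (Multiplicative.toAdd b.2) with h4 | h4 <;>
            simp [kleinSmul, Prod.ext_iff, toAdd_mul, h1, h2, h3, h4,
              show (1 + 1 : ZMod 2) = 0 by decide, show (0 + 1 : ZMod 2) = 1 by decide,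
              show (1 + 0 : ZMod 2) = 1 by decide, show (1 : ZMod 2) ≠ 0 by decide]

/-- The first generator `s₁ : (x,y) ↦ (x⁻¹,y⁻¹)`. -/
def s₁ : Multiplicative (ZMod 2) × Multiplicative (ZMod 2) :=
  (Multiplicative.ofAdd 1, Multiplicative.ofAdd 0)

/-- The second generator `s₂ : (x,y) ↦ (y,x)`. -/
def s₂ : Multiplicative (ZMod 2) × Multiplicative (ZMod 2) :=
  (Multiplicative.ofAdd 0, Multiplicative.ofAdd 1)


/-- The group `ℤ/2ℤ` acting on `ℂˣ` with the nontrivial element acting by `λ ↦ λ⁻¹`. -/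
instance z2InvAction : MulAction (Multiplicative (ZMod 2)) ℂˣ where
  smul g x := if Multiplicative.toAdd g = 0 then x else x⁻¹
  one_smul x := by
    show (if Multiplicative.toAdd (1 : Multiplicative (ZMod 2)) = 0 then x else x⁻¹) = x
    simp
  mul_smul a b x := by
    show (if Multiplicative.toAdd (a * b) = 0 then x else x⁻¹) =
      (if Multiplicative.toAdd a = 0 then
        (if Multiplicative.toAdd b = 0 then x else x⁻¹)
       else (if Multiplicative.toAdd b = 0 then x else x⁻¹)⁻¹)
    have h : ∀ c : ZMod 2, c = 0 ∨ c = 1 := by decide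
    rcases h (Multiplicative.toAdd a) with ha | ha <;>
      rcases h (Multiplicative.toAdd b) with hb | hb <;>
        simp [toAdd_mul, ha, hb, show (1 + 1 : ZMod 2) = 0 by decide,
          show (0 + 1 : ZMod 2) = 1 by decide, show (1 + 0 : ZMod 2) = 1 by decide,
          show (1 : ZMod 2) ≠ 0 by decide]

/-! Since `W` is abelian, `D//W` is the disjoint union over `w ∈ W` of `D^w / W`. For `w = 1` this
is `D/W`. The fixed sets of `s₂` and `s₁s₂` are the diagonal and the antidiagonal; projecting to the
first coordinate identifies them with `ℂˣ`, on which `W` then acts through a surjection onto `ℤ/2ℤ`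
acting by inversion. The fixed set of `s₁` is `{±1}²`, where `s₁` acts trivially and `s₂` swaps the
coordinates, leaving three orbits. -/

open MulAction

section OrbitQuotient

variable {G α β : Type*} [Group G] [MulAction G α]

noncomputable def orbitRelQuotientEquivOfSurjective (f : α → β) (hf : Function.Surjective f)
    (hker : ∀ a b, f a = f b ↔ orbitRel G α a b) : Quotient (orbitRel G α) ≃ β :=
  (Quotient.congrRight fun a b => (hker a b).symm).trans
    (Setoid.quotientKerEquivOfSurjective f hf)

noncomputable def orbitRelQuotientCongr {H : Type*} [Group H] [MulAction H β] (φ : G →* H)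
    (hφ : Function.Surjective φ) (e : α ≃ β) (he : ∀ (g : G) (a : α), e (g • a) = φ g • e a) :
    Quotient (orbitRel G α) ≃ Quotient (orbitRel H β) :=
  orbitRelQuotientEquivOfSurjective (fun a => ⟦e a⟧) (Quotient.mk_surjective.comp e.surjective)
    fun a b => by
      simp only [Quotient.eq, orbitRel_apply, mem_orbit_iff]
      constructor
      · rintro ⟨h, hh⟩
        obtain ⟨g, rfl⟩ := hφ h
        exact ⟨g, e.injective (by rw [he, hh])⟩
      · rintro ⟨g, rfl⟩
        exact ⟨φ g, (he g b).symm⟩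

end OrbitQuotient

section ExtendedQuotient

variable {Γ X : Type*} [CommGroup Γ] [MulAction Γ X]

def fixedBySubMulAction (γ : Γ) : SubMulAction Γ X where
  carrier := fixedBy X γ
  smul_mem' g x hx := by rw [mem_fixedBy, smul_smul, mul_comm, mul_smul, hx]

@[simp] theorem mem_fixedBySubMulAction {γ : Γ} {x : X} :
    x ∈ fixedBySubMulAction γ ↔ γ • x = x := Iff.rfl

noncomputable def fixedByOneQuotientEquiv :
    Quotient (orbitRel Γ (fixedBySubMulAction (X := X) (1 : Γ))) ≃ OrdQuot Γ X :=
  orbitRelQuotientCongr (MonoidHom.id Γ) Function.surjective_id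
    (Equiv.subtypeUnivEquiv fun x => one_smul Γ x) fun _ _ => rfl

theorem Xtilde.orbitRel_iff (p q : Xtilde Γ X) :
    orbitRel Γ (Xtilde Γ X) p q ↔ p.val.1 = q.val.1 ∧ ∃ g : Γ, g • q.val.2 = p.val.2 := by
  rw [orbitRel_apply, mem_orbit_iff]
  constructor
  · rintro ⟨g, rfl⟩
    exact ⟨mul_inv_cancel_comm g q.val.1, g, rfl⟩
  · rintro ⟨h₁, g, h₂⟩
    exact ⟨g, Subtype.ext (Prod.ext ((mul_inv_cancel_comm g _).trans h₁.symm) h₂)⟩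

noncomputable def extQuotEquivSigma :
    ExtQuot Γ X ≃ Σ γ : Γ, Quotient (orbitRel Γ (fixedBySubMulAction (X := X) γ)) :=
  orbitRelQuotientEquivOfSurjective (fun p => ⟨p.val.1, ⟦⟨p.val.2, p.property⟩⟧⟩)
    (by
      rintro ⟨γ, q⟩
      induction q using Quotient.inductionOn with
      | h x => exact ⟨⟨(γ, x.1), x.2⟩, rfl⟩)
    (by
      intro p q
      rw [Xtilde.orbitRel_iff, Sigma.mk.inj_iff]
      obtain ⟨⟨γ, x⟩, hx⟩ := p
      obtain ⟨⟨δ, y⟩, hy⟩ := q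
      constructor <;> rintro ⟨rfl : γ = δ, h⟩ <;> refine ⟨rfl, ?_⟩ <;>
        simpa [Quotient.eq, orbitRel_apply, mem_orbit_iff, Subtype.ext_iff] using h)

end ExtendedQuotient

section Klein

local notation "W" => Multiplicative (ZMod 2) × Multiplicative (ZMod 2)

theorem klein_cases (w : W) : w = 1 ∨ w = s₁ ∨ w = s₂ ∨ w = s₁ * s₂ := by
  revert w; decide

@[simp] theorem s₁_fst : s₁.1 = Multiplicative.ofAdd 1 := rfl
@[simp] theorem s₁_snd : s₁.2 = 1 := rfl
@[simp] theorem s₂_fst : s₂.1 = 1 := rfl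
@[simp] theorem s₂_snd : s₂.2 = Multiplicative.ofAdd 1 := rfl

@[simp] theorem s₁_smul (p : ℂˣ × ℂˣ) : s₁ • p = (p.1⁻¹, p.2⁻¹) := rfl
@[simp] theorem s₂_smul (p : ℂˣ × ℂˣ) : s₂ • p = (p.2, p.1) := rfl
@[simp] theorem s₁_mul_s₂_smul (p : ℂˣ × ℂˣ) : (s₁ * s₂) • p = (p.2⁻¹, p.1⁻¹) := rfl
@[simp] theorem ofAdd_one_mul_self :
    Multiplicative.ofAdd (1 : ZMod 2) * Multiplicative.ofAdd 1 = 1 := rfl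
@[simp] theorem ofAdd_one_smul (x : ℂˣ) : Multiplicative.ofAdd (1 : ZMod 2) • x = x⁻¹ := rfl

def diagonalEquiv : fixedBySubMulAction (X := ℂˣ × ℂˣ) s₂ ≃ ℂˣ where
  toFun p := p.1.1
  invFun x := ⟨(x, x), rfl⟩
  left_inv p :=
    Subtype.ext (Prod.ext rfl (congrArg Prod.fst (mem_fixedBySubMulAction.mp p.2)).symm)
  right_inv _ := rfl

def antidiagonalEquiv : fixedBySubMulAction (X := ℂˣ × ℂˣ) (s₁ * s₂) ≃ ℂˣ where
  toFun p := p.1.1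
  invFun x := ⟨(x, x⁻¹), by simp⟩
  left_inv p := Subtype.ext
    (Prod.ext rfl (by simpa using congrArg Prod.snd (mem_fixedBySubMulAction.mp p.2)))
  right_inv _ := rfl

noncomputable def diagonalQuotientEquiv :
    Quotient (orbitRel W (fixedBySubMulAction (X := ℂˣ × ℂˣ) s₂)) ≃
      OrdQuot (Multiplicative (ZMod 2)) ℂˣ :=
  orbitRelQuotientCongr (MonoidHom.fst _ _) Prod.fst_surjective diagonalEquiv
    fun g ⟨⟨x, y⟩, hp⟩ => by
      obtain rfl : y = x := congrArg Prod.fst (mem_fixedBySubMulAction.mp hp)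
      rcases klein_cases g with rfl | rfl | rfl | rfl <;> simp [diagonalEquiv]

noncomputable def antidiagonalQuotientEquiv :
    Quotient (orbitRel W (fixedBySubMulAction (X := ℂˣ × ℂˣ) (s₁ * s₂))) ≃
      OrdQuot (Multiplicative (ZMod 2)) ℂˣ :=
  orbitRelQuotientCongr mulMonoidHom (fun z => ⟨(z, 1), mul_one z⟩) antidiagonalEquiv
    fun g ⟨⟨x, y⟩, hp⟩ => by
      obtain rfl : y = x⁻¹ := (congrArg Prod.snd (mem_fixedBySubMulAction.mp hp)).symm
      rcases klein_cases g with rfl | rfl | rfl | rfl <;> simp [antidiagonalEquiv]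

theorem orbitRel_fixedBy_s₁_iff (p q : fixedBySubMulAction (X := ℂˣ × ℂˣ) s₁) :
    orbitRel W _ p q ↔ p.1 = q.1 ∨ p.1 = s₂ • q.1 := by
  have hq := mem_fixedBySubMulAction.mp q.2
  rw [orbitRel_apply, mem_orbit_iff]
  constructor
  · rintro ⟨g, rfl⟩
    rcases klein_cases g with rfl | rfl | rfl | rfl
    · exact Or.inl (one_smul _ _)
    · exact Or.inl hq
    · exact Or.inr rfl
    · exact Or.inr (by rw [SubMulAction.val_smul, mul_comm, mul_smul, hq])
  · rintro (h | h)
    · exact ⟨1, Subtype.ext (by rw [one_smul, h])⟩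
    · exact ⟨s₂, Subtype.ext h.symm⟩

/-- Labels the `W`-orbits `{(1,1)}`, `{(-1,-1)}`, `{(1,-1),(-1,1)}` of the fixed set `{±1}²` of
`s₁` by `0`, `1`, `2`. -/
noncomputable def s₁FixedOrbitIndex (p : ℂˣ × ℂˣ) : Fin 3 :=
  if p.1 = p.2 then if p.1 = 1 then 0 else 1 else 2

theorem s₁FixedOrbitIndex_eq_iff (p q : fixedBySubMulAction (X := ℂˣ × ℂˣ) s₁) :
    s₁FixedOrbitIndex p.1 = s₁FixedOrbitIndex q.1 ↔ p.1 = q.1 ∨ p.1 = s₂ • q.1 := by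
  obtain ⟨⟨a, b⟩, hp⟩ := p
  obtain ⟨⟨c, d⟩, hq⟩ := q
  simp only [mem_fixedBySubMulAction, s₁_smul, Prod.mk.injEq, Units.inv_eq_self_iff] at hp hq
  obtain ⟨rfl | rfl, rfl | rfl⟩ := hp <;> obtain ⟨rfl | rfl, rfl | rfl⟩ := hq <;>
    simp [s₁FixedOrbitIndex]

noncomputable def s₁FixedQuotientEquiv :
    Quotient (orbitRel W (fixedBySubMulAction (X := ℂˣ × ℂˣ) s₁)) ≃ Fin 3 :=
  orbitRelQuotientEquivOfSurjective (fun p => s₁FixedOrbitIndex p.1)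
    (by
      intro i
      fin_cases i
      · exact ⟨⟨(1, 1), by simp⟩, by simp [s₁FixedOrbitIndex]⟩
      · exact ⟨⟨(-1, -1), by simp⟩, by simp [s₁FixedOrbitIndex]⟩
      · exact ⟨⟨(1, -1), by simp⟩, by simp [s₁FixedOrbitIndex]⟩)
    fun p q => (s₁FixedOrbitIndex_eq_iff p q).trans (orbitRel_fixedBy_s₁_iff p q).symm

noncomputable def sumUnitEquivKlein : Unit ⊕ Unit ⊕ Unit ⊕ Unit ≃ W :=
  Equiv.ofBijective (Sum.elim (fun _ => 1) (Sum.elim (fun _ => s₂) (Sum.elim (fun _ => s₁ * s₂)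
    fun _ => s₁))) (by decide)

noncomputable def sigmaKleinEquiv (F : W → Type*) :
    (Σ w, F w) ≃ F 1 ⊕ F s₂ ⊕ F (s₁ * s₂) ⊕ F s₁ :=
  (Equiv.sigmaCongrLeft sumUnitEquivKlein).symm.trans <| (Equiv.sumSigmaDistrib _).trans <|
    Equiv.sumCongr (Equiv.uniqueSigma _) <| (Equiv.sumSigmaDistrib _).trans <|
      Equiv.sumCongr (Equiv.uniqueSigma _) <| (Equiv.sumSigmaDistrib _).trans <|
        Equiv.sumCongr (Equiv.uniqueSigma _) (Equiv.uniqueSigma _)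

end Klein

/-- For the Klein four-group `W = ℤ/2ℤ × ℤ/2ℤ` acting on `D = ℂˣ × ℂˣ` via
`s₁ : (x,y) ↦ (x⁻¹,y⁻¹)` and `s₂ : (x,y) ↦ (y,x)`, the extended quotient `D//W` is in
bijection with the disjoint union of `D/W`, the quotient of the diagonal `{(λ,λ)}` by
`λ ↦ λ⁻¹`, the quotient of the antidiagonal `{(λ,λ⁻¹)}` by `λ ↦ λ⁻¹` (both of which are
copies of the quotient of `ℂˣ` by inversion), and three points. -/
theorem extQuot_klein :
    Nonempty (ExtQuot (Multiplicative (ZMod 2) × Multiplicative (ZMod 2)) (ℂˣ × ℂˣ) ≃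
      (OrdQuot (Multiplicative (ZMod 2) × Multiplicative (ZMod 2)) (ℂˣ × ℂˣ) ⊕
        OrdQuot (Multiplicative (ZMod 2)) ℂˣ ⊕
        OrdQuot (Multiplicative (ZMod 2)) ℂˣ ⊕
        Fin 3)) :=
  ⟨extQuotEquivSigma.trans <| (sigmaKleinEquiv _).trans <|
    Equiv.sumCongr fixedByOneQuotientEquiv <| Equiv.sumCongr diagonalQuotientEquiv <|
      Equiv.sumCongr antidiagonalQuotientEquiv s₁FixedQuotientEquiv⟩
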